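/- Suppose Ax = b and let y ∈ ℂⁿ have residual r = b − Ay with r_(p) = 0 for some index p. Let i* be an index maximizing |r_(j)|/‖A_(j)‖₂ over j = 1,…,m and set x' = K_{i*}(y). Then ‖x' − x‖₂² ≤ (1 − λ_min(A^H A)/γ)·‖y − x‖₂², where γ = max_{1≤i≤m} Σ_{j≠i} ‖A_(j)‖₂². -/

import Mathlib

/-- Squared Euclidean 2-norm of a vector in `ℂⁿ`. -/
noncomputable def rnsq {n : ℕ} (v : Fin n → ℂ) : ℝ := ∑ j, ‖v j‖ ^ 2

/-- The Kaczmarz update of `y` with respect to row `i` of `A`. -/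
noncomputable def kacz {m n : ℕ} (A : Matrix (Fin m) (Fin n) ℂ) (b : Fin m → ℂ)
    (i : Fin m) (y : Fin n → ℂ) : Fin n → ℂ :=
  fun j => y j + ((b i - ∑ l, A i l * y l) / ((∑ l, ‖A i l‖ ^ 2 : ℝ) : ℂ)) * (starRingEnd ℂ) (A i j)

/-- The smallest eigenvalue of the Hermitian positive semidefinite matrix `AᴴA`. -/
noncomputable def lamMin {m n : ℕ} (A : Matrix (Fin m) (Fin n) ℂ) : ℝ :=
  ⨅ k : Fin n, (Matrix.isHermitian_conjTranspose_mul_self A).eigenvalues k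

open Matrix Finset

lemma sum_normsq_eq_re_dot {n : ℕ} (u : Fin n → ℂ) :
    (∑ k, ‖u k‖ ^ 2 : ℝ) = Complex.re (dotProduct (star u) u) := by
  rw [dotProduct, Complex.re_sum]
  refine Finset.sum_congr rfl fun k _ => ?_
  simp [Complex.sq_norm, Complex.normSq_apply, Complex.mul_re]
  try ring

lemma rayleigh {m n : ℕ} (A : Matrix (Fin m) (Fin n) ℂ) (v : Fin n → ℂ) :
    lamMin A * (∑ k, ‖v k‖ ^ 2) ≤ ∑ j, ‖(A *ᵥ v) j‖ ^ 2 := by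
  have hM := Matrix.isHermitian_conjTranspose_mul_self A
  set U : Matrix (Fin n) (Fin n) ℂ := (hM.eigenvectorUnitary : Matrix (Fin n) (Fin n) ℂ) with hUdef
  have hU1 : U * star U = 1 := (Matrix.mem_unitaryGroup_iff).mp hM.eigenvectorUnitary.2
  set w : Fin n → ℂ := star U *ᵥ v with hw
  have hstarw : star w = star v ᵥ* U := by
    rw [hw, Matrix.star_mulVec, Matrix.star_eq_conjTranspose, Matrix.conjTranspose_conjTranspose]
  set D : Matrix (Fin n) (Fin n) ℂ := Matrix.diagonal (RCLike.ofReal ∘ hM.eigenvalues) with hD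
  have key1 : ∑ j, ‖(A *ᵥ v) j‖ ^ 2
      = Complex.re (dotProduct (star w) (D *ᵥ w)) := by
    rw [sum_normsq_eq_re_dot]
    congr 1
    calc star (A *ᵥ v) ⬝ᵥ (A *ᵥ v)
        = (star v ᵥ* Aᴴ) ⬝ᵥ (A *ᵥ v) := by rw [Matrix.star_mulVec]
      _ = star v ⬝ᵥ (Aᴴ *ᵥ (A *ᵥ v)) := (Matrix.dotProduct_mulVec _ _ _).symm
      _ = star v ⬝ᵥ ((Aᴴ * A) *ᵥ v) := by rw [Matrix.mulVec_mulVec]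
      _ = star v ⬝ᵥ ((U * D * star U) *ᵥ v) := by rw [hM.spectral_theorem, Unitary.conjStarAlgAut_apply]
      _ = star v ⬝ᵥ (U *ᵥ (D *ᵥ w)) := by
            rw [hw, ← Matrix.mulVec_mulVec, ← Matrix.mulVec_mulVec]
      _ = (star v ᵥ* U) ⬝ᵥ (D *ᵥ w) := Matrix.dotProduct_mulVec _ _ _
      _ = star w ⬝ᵥ (D *ᵥ w) := by rw [hstarw]
  have key2 : (∑ k, ‖v k‖ ^ 2 : ℝ) = ∑ k, ‖w k‖ ^ 2 := by
    rw [sum_normsq_eq_re_dot, sum_normsq_eq_re_dot]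
    congr 1
    calc star v ⬝ᵥ v = star v ⬝ᵥ ((U * star U) *ᵥ v) := by rw [hU1, Matrix.one_mulVec]
      _ = star v ⬝ᵥ (U *ᵥ w) := by rw [hw, ← Matrix.mulVec_mulVec]
      _ = (star v ᵥ* U) ⬝ᵥ w := Matrix.dotProduct_mulVec _ _ _
      _ = star w ⬝ᵥ w := by rw [hstarw]
  have key3 : Complex.re (dotProduct (star w) (D *ᵥ w))
      = ∑ k, hM.eigenvalues k * ‖w k‖ ^ 2 := by
    rw [dotProduct, Complex.re_sum]
    refine Finset.sum_congr rfl fun k _ => ?_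
    rw [hD, Matrix.mulVec_diagonal]
    simp [Complex.sq_norm, Complex.normSq_apply, Complex.mul_re,
      Complex.mul_im]
    try ring
  rw [key1, key2, key3]
  have hb : ∀ k : Fin n, lamMin A ≤ hM.eigenvalues k := fun k =>
    ciInf_le (Set.Finite.bddBelow (Set.finite_range _)) k
  rw [Finset.mul_sum]
  exact Finset.sum_le_sum fun k _ => mul_le_mul_of_nonneg_right (hb k) (sq_nonneg _)


lemma kacz_err {m n : ℕ} (A : Matrix (Fin m) (Fin n) ℂ) (b : Fin m → ℂ) (i : Fin m)
    (hN : (0:ℝ) < ∑ l, ‖A i l‖ ^ 2)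
    (x y : Fin n → ℂ) (hx : ∑ l, A i l * x l = b i) :
    rnsq (fun j => kacz A b i y j - x j)
      = rnsq (fun j => y j - x j) - ‖b i - ∑ l, A i l * y l‖ ^ 2 / (∑ l, ‖A i l‖ ^ 2) := by
  set N : ℝ := ∑ l, ‖A i l‖ ^ 2 with hNdef
  set r : ℂ := b i - ∑ l, A i l * y l with hrdef
  set c : ℂ := r / (N : ℂ) with hcdef
  have hNne : (N : ℂ) ≠ 0 := by exact_mod_cast hN.ne'
  have hre : ∑ l, A i l * (y l - x l) = -r := by
    simp only [mul_sub, Finset.sum_sub_distrib, hx, hrdef]; ring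
  have hterm : ∀ j, kacz A b i y j - x j = (y j - x j) + c * (starRingEnd ℂ) (A i j) := by
    intro j; simp only [kacz, hcdef, hrdef, ← hNdef]; ring
  have nsq : ∀ z : ℂ, ‖z‖ ^ 2 = Complex.normSq z := fun z => by
    rw [Complex.sq_norm]
  have expand : ∀ j, ‖(y j - x j) + c * (starRingEnd ℂ) (A i j)‖ ^ 2
      = ‖y j - x j‖ ^ 2 + Complex.normSq c * ‖A i j‖ ^ 2
        + 2 * ((y j - x j) * ((starRingEnd ℂ) c * A i j)).re := by
    intro j
    rw [nsq, Complex.normSq_add, nsq, nsq]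
    rw [Complex.normSq_mul, Complex.normSq_conj]
    congr 2
    rw [RingHom.map_mul, Complex.conj_conj]
  have hsum : rnsq (fun j => kacz A b i y j - x j)
      = rnsq (fun j => y j - x j) + Complex.normSq c * N
        + 2 * ((starRingEnd ℂ) c * ∑ j, A i j * (y j - x j)).re := by
    unfold rnsq
    simp only [hterm, expand]
    rw [Finset.sum_add_distrib, Finset.sum_add_distrib, ← Finset.mul_sum, ← hNdef]
    congr 1
    rw [← Finset.mul_sum, ← Complex.re_sum, Finset.mul_sum]
    congr 2
    exact Finset.sum_congr rfl fun j _ => by ring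
  have h1 : Complex.normSq c * N = Complex.normSq r / N := by
    rw [hcdef, Complex.normSq_div, Complex.normSq_ofReal]
    field_simp
  have h2 : ((starRingEnd ℂ) c * ∑ j, A i j * (y j - x j)).re = -(Complex.normSq r / N) := by
    rw [hre, hcdef, map_div₀, Complex.conj_ofReal]
    have : (starRingEnd ℂ) r / (N:ℂ) * -r = ((-(Complex.normSq r / N) : ℝ) : ℂ) := by
      push_cast
      rw [div_mul_eq_mul_div, mul_neg, Complex.normSq_eq_conj_mul_self]
      ring
    rw [this, Complex.ofReal_re]
  rw [hsum, h1, h2, ← nsq]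
  ring


/-- Suppose `Ax = b` and let `y ∈ ℂⁿ` have residual `r = b − Ay` with `r_(p) = 0` for
some index `p`. If `i*` maximizes `|r_(j)|/‖A_(j)‖₂` and `x' = K_{i*}(y)`, then
`‖x' − x‖₂² ≤ (1 − λ_min(AᴴA)/γ)·‖y − x‖₂²` where `γ = max_i Σ_{j≠i} ‖A_(j)‖₂²`. -/
theorem stmt7 {m n : ℕ} (hm : 2 ≤ m) (hn : 0 < n) (A : Matrix (Fin m) (Fin n) ℂ)
    (hrows : ∀ i, A i ≠ 0) (b : Fin m → ℂ)
    (x : Fin n → ℂ) (hx : ∀ i', ∑ l, A i' l * x l = b i')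
    (y : Fin n → ℂ) (p : Fin m) (hp : b p - ∑ l, A p l * y l = 0)
    (istar : Fin m)
    (histar : ∀ j, ‖b j - ∑ l, A j l * y l‖ / Real.sqrt (∑ l, ‖A j l‖ ^ 2) ≤
      ‖b istar - ∑ l, A istar l * y l‖ / Real.sqrt (∑ l, ‖A istar l‖ ^ 2)) :
    rnsq (fun j => kacz A b istar y j - x j) ≤
      (1 - lamMin A /
          Finset.univ.sup' ⟨⟨0, by omega⟩, Finset.mem_univ _⟩
            (fun i => ∑ j ∈ Finset.univ.erase i, ∑ l, ‖A j l‖ ^ 2)) *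
        rnsq (fun j => y j - x j) := by
  classical
  set N : Fin m → ℝ := fun i => ∑ l, ‖A i l‖ ^ 2 with hNdef
  have hNpos : ∀ i, 0 < N i := by
    intro i
    obtain ⟨l0, hl0⟩ : ∃ l, A i l ≠ 0 := by
      by_contra h
      push_neg at h
      exact hrows i (funext h)
    exact Finset.sum_pos' (fun l _ => sq_nonneg _)
      ⟨l0, Finset.mem_univ _, pow_pos (norm_pos_iff.mpr hl0) 2⟩
  set r : Fin m → ℂ := fun j => b j - ∑ l, A j l * y l with hrdef
  set G : ℝ := Finset.univ.sup' ⟨⟨0, by omega⟩, Finset.mem_univ _⟩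
      (fun i => ∑ j ∈ Finset.univ.erase i, ∑ l, ‖A j l‖ ^ 2) with hGdef
  have hGge : ∀ i : Fin m, ∑ j ∈ Finset.univ.erase i, N j ≤ G := by
    intro i
    exact Finset.le_sup' (fun i => ∑ j ∈ Finset.univ.erase i, ∑ l, ‖A j l‖ ^ 2)
      (Finset.mem_univ i)
  have hGpos : 0 < G := by
    have h0 : (⟨0, by omega⟩ : Fin m) ≠ ⟨1, by omega⟩ := by
      simp [Fin.ext_iff]
    have h1 : N ⟨1, by omega⟩ ≤ ∑ j ∈ Finset.univ.erase ⟨0, by omega⟩, N j :=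
      Finset.single_le_sum (fun j _ => (hNpos j).le)
        (Finset.mem_erase.mpr ⟨h0.symm, Finset.mem_univ _⟩)
    exact lt_of_lt_of_le (hNpos _) (h1.trans (hGge _))
  set t : ℝ := ‖r istar‖ ^ 2 / N istar with htdef
  have ht0 : 0 ≤ t := div_nonneg (sq_nonneg _) (hNpos istar).le
  -- each residual bounded by t * N j
  have hres : ∀ j, ‖r j‖ ^ 2 ≤ t * N j := by
    intro j
    have hsq : ∀ i : Fin m, (‖r i‖ / Real.sqrt (N i)) ^ 2 = ‖r i‖ ^ 2 / N i := by
      intro i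
      rw [div_pow, Real.sq_sqrt (hNpos i).le]
    have := pow_le_pow_left₀ (div_nonneg (norm_nonneg _)
        (Real.sqrt_nonneg _)) (histar j) 2
    rw [hsq, hsq] at this
    calc ‖r j‖ ^ 2 = ‖r j‖ ^ 2 / N j * N j := by
          rw [div_mul_cancel₀ _ (hNpos j).ne']
      _ ≤ t * N j := mul_le_mul_of_nonneg_right this (hNpos j).le
  -- residual sum bounded by t * G
  have hsumres : ∑ j, ‖r j‖ ^ 2 ≤ t * G := by
    have hz : ‖r p‖ ^ 2 = 0 := by rw [hrdef]; simp [hp]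
    have h1 : ∑ j, ‖r j‖ ^ 2 = ∑ j ∈ Finset.univ.erase p, ‖r j‖ ^ 2 := by
      rw [← Finset.sum_erase_add _ _ (Finset.mem_univ p), hz, add_zero]
    rw [h1]
    calc ∑ j ∈ Finset.univ.erase p, ‖r j‖ ^ 2
        ≤ ∑ j ∈ Finset.univ.erase p, t * N j :=
          Finset.sum_le_sum fun j _ => hres j
      _ = t * ∑ j ∈ Finset.univ.erase p, N j := by rw [Finset.mul_sum]
      _ ≤ t * G := mul_le_mul_of_nonneg_left (hGge p) ht0
  -- Rayleigh bound
  have hAe : ∀ j, (A *ᵥ (fun l => y l - x l)) j = -r j := by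
    intro j
    rw [Matrix.mulVec, dotProduct, hrdef]
    simp only [mul_sub, Finset.sum_sub_distrib, hx j]
    ring
  have hray : lamMin A * rnsq (fun j => y j - x j) ≤ t * G := by
    have := rayleigh A (fun l => y l - x l)
    rw [show rnsq (fun j => y j - x j) = ∑ k, ‖y k - x k‖ ^ 2 from rfl]
    refine le_trans (le_of_le_of_eq this ?_) hsumres
    refine Finset.sum_congr rfl fun j _ => ?_
    rw [hAe j, norm_neg]
  -- combine
  have hkacz := kacz_err A b istar (hNpos istar) x y (hx istar)
  rw [hkacz]
  have hfrac : lamMin A / G * rnsq (fun j => y j - x j) ≤ t := by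
    rw [div_mul_eq_mul_div, div_le_iff₀ hGpos]
    linarith [hray]
  have : ‖b istar - ∑ l, A istar l * y l‖ ^ 2 / (∑ l, ‖A istar l‖ ^ 2) = t := rfl
  rw [this]
  nlinarith [hfrac]
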